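/- Fix n ∈ {1,…,N}, x_1,…,x_T ∈ ℝ^L, nonnegative coefficients a_{jt} ≥ 0, and vectors e_j ∈ ℝ^L for j ≠ n, and define J(e) = (1/2)∑_{t=1}^T ‖x_t x_tᵀ − a_{nt}·e eᵀ − ∑_{j≠n} a_{jt}·e_j e_jᵀ‖²_F. If there exists a coordinate k ∈ {1,…,L} such that ∑_{t=1}^T a_{nt}( ∑_{j≠n} a_{jt} e_{jk}² − x_{kt}² ) < 0, then J is not a convex function on ℝ^L. In particular, the kernel-NMF suboptimization problem over a single endmember with the quadratic polynomial kernel is in general nonconvex. -/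

import Mathlib

/-!
On the coordinate line `v = s • eₖ` the feature `v vᵀ` is `s² Eₖₖ`, so the cost becomes the even
quartic `C - B s² + Q s⁴` with `B = ∑ₜ aₙₜ (xₖₜ² - ∑_{j≠n} aⱼₜ eⱼₖ²)`, which is positive by hypothesis.
Such a quartic has a strict local maximum at `0`, so it is not convex, whereas the restriction of a
convex function to a line is convex.
-/

open Finset

attribute [local instance] Matrix.frobeniusNormedAddCommGroup

namespace Matrix

theorem vecMulVec_single_single {m : Type*} [DecidableEq m] (k : m) (s : ℝ) :
    vecMulVec (Pi.single k s) (Pi.single k s) = single k k (s ^ 2) := by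
  ext a b
  simp only [vecMulVec_apply, single_apply, Pi.single_apply]
  split_ifs <;> grind

variable {m n : Type*} [Fintype m] [Fintype n]

theorem frobenius_norm_sq_eq_sum (A : Matrix m n ℝ) : ‖A‖ ^ 2 = ∑ i, ∑ j, A i j ^ 2 := by
  rw [frobenius_norm_def, ← Real.rpow_natCast, ← Real.rpow_mul (by positivity)]
  norm_num

theorem frobenius_norm_sub_single_sq [DecidableEq m] [DecidableEq n]
    (A : Matrix m n ℝ) (i : m) (j : n) (r : ℝ) :
    ‖A - single i j r‖ ^ 2 = ‖A‖ ^ 2 - 2 * r * A i j + r ^ 2 := by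
  have hentry : ∀ a b,
      (A - single i j r) a b ^ 2 = A a b ^ 2 + single i j (r ^ 2 - 2 * r * A i j) a b := by
    intro a b
    by_cases h : i = a ∧ j = b
    · obtain ⟨rfl, rfl⟩ := h; simp; ring
    · simp [h]
  simp only [frobenius_norm_sq_eq_sum, hentry, sum_add_distrib, single_apply, ite_and,
    sum_ite_irrel, sum_ite_eq, mem_univ, if_true, sum_const_zero]
  ring

end Matrix

theorem not_convexOn_univ_quartic {C B Q : ℝ} (hB : 0 < B) :
    ¬ ConvexOn ℝ Set.univ (fun s : ℝ => C - B * s ^ 2 + Q * s ^ 4) := by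
  intro hconv
  have hmid : ∀ s : ℝ, B * s ^ 2 ≤ Q * s ^ 4 := by
    intro s
    have hconv_s := hconv.2 (Set.mem_univ (-s)) (Set.mem_univ s)
      (by norm_num : (0 : ℝ) ≤ 1 / 2) (by norm_num : (0 : ℝ) ≤ 1 / 2) (by norm_num)
    simp only [smul_eq_mul] at hconv_s
    nlinarith [hconv_s]
  set s := Real.sqrt (B / (|Q| + 1))
  have hs : s ^ 2 = B / (|Q| + 1) := Real.sq_sqrt (by positivity)
  have hQ : Q * s ^ 4 ≤ |Q| * s ^ 4 := mul_le_mul_of_nonneg_right (le_abs_self Q) (by positivity)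
  have hsmall : |Q| * s ^ 4 < B * s ^ 2 := by
    rw [show s ^ 4 = (s ^ 2) ^ 2 by ring, hs]
    field_simp
    nlinarith [abs_nonneg Q]
  linarith [hmid s]

theorem sum_frobenius_norm_sub_smul_single_sq {ι m : Type*} [Fintype ι] [Fintype m]
    [DecidableEq m] (A : ι → Matrix m m ℝ) (c : ι → ℝ) (k : m) (s : ℝ) :
    (1 / 2 : ℝ) * ∑ t, ‖A t - c t • Matrix.single k k (s ^ 2)‖ ^ 2 =
      (1 / 2 : ℝ) * ∑ t, ‖A t‖ ^ 2 - (∑ t, c t * A t k k) * s ^ 2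
        + ((1 / 2 : ℝ) * ∑ t, c t ^ 2) * s ^ 4 := by
  calc _ = ∑ t, ((1 / 2 : ℝ) * ‖A t‖ ^ 2 - c t * A t k k * s ^ 2
            + (1 / 2 : ℝ) * c t ^ 2 * s ^ 4) := by
        rw [mul_sum]
        refine sum_congr rfl fun t _ => ?_
        rw [Matrix.smul_single, smul_eq_mul, Matrix.frobenius_norm_sub_single_sq]
        ring
    _ = _ := by simp only [sum_add_distrib, sum_sub_distrib, mul_sum, sum_mul]

theorem kernelNMF_quadratic_endmember_subproblem_nonconvex_general
    {L N T : ℕ} (n : Fin N)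
    (x : Fin T → Fin L → ℝ)
    (a : Fin N → Fin T → ℝ)
    (e : Fin N → Fin L → ℝ)
    (k : Fin L)
    (hneg : ∑ t, a n t * (∑ j ∈ univ.erase n, a j t * (e j k)^2 - (x t k)^2) < 0) :
    ¬ ConvexOn ℝ Set.univ
      (fun v : Fin L → ℝ =>
        (1/2 : ℝ) * ∑ t, ‖Matrix.vecMulVec (x t) (x t)
            - a n t • Matrix.vecMulVec v v
            - ∑ j ∈ univ.erase n, a j t • Matrix.vecMulVec (e j) (e j)‖^2) := by
  set A : Fin T → Matrix (Fin L) (Fin L) ℝ := fun t =>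
    Matrix.vecMulVec (x t) (x t) - ∑ j ∈ univ.erase n, a j t • Matrix.vecMulVec (e j) (e j)
  have hA : ∀ t, A t k k = (x t k) ^ 2 - ∑ j ∈ univ.erase n, a j t * (e j k) ^ 2 := by
    simp [A, Matrix.vecMulVec_apply, Matrix.sum_apply, sq]
  have hB : 0 < ∑ t, a n t * A t k k := by
    have : ∑ t, a n t * A t k k
        = -∑ t, a n t * (∑ j ∈ univ.erase n, a j t * (e j k)^2 - (x t k)^2) := by
      rw [← sum_neg_distrib]
      exact sum_congr rfl fun t _ => by rw [hA]; ring
    linarith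
  intro hconv
  refine not_convexOn_univ_quartic (C := (1 / 2 : ℝ) * ∑ t, ‖A t‖ ^ 2)
    (Q := (1 / 2 : ℝ) * ∑ t, a n t ^ 2) hB ?_
  have hline := hconv.comp_linearMap (LinearMap.single ℝ (fun _ : Fin L => ℝ) k)
  rw [Set.preimage_univ] at hline
  refine hline.congr fun s _ => ?_
  simp only [Function.comp_apply, LinearMap.coe_single, Matrix.vecMulVec_single_single,
    sub_right_comm _ (a n _ • _), ← sum_frobenius_norm_sub_smul_single_sq, A]

/-- For the quadratic polynomial kernel (feature map `Φ(u) = u uᵀ`), if some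
coordinate `k` satisfies `∑_t a_{nt}(∑_{j≠n} a_{jt} e_{jk}² − x_{kt}²) < 0`,
then the kernel-NMF cost, as a function of the single endmember `e = e_n`,
is not convex on `ℝ^L`. -/
theorem kernelNMF_quadratic_endmember_subproblem_nonconvex
    {L N T : ℕ} (n : Fin N)
    (x : Fin T → Fin L → ℝ)
    (a : Fin N → Fin T → ℝ) (ha : ∀ j t, 0 ≤ a j t)
    (e : Fin N → Fin L → ℝ)
    (k : Fin L)
    (hneg : ∑ t, a n t * (∑ j ∈ univ.erase n, a j t * (e j k)^2 - (x t k)^2) < 0) :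
    ¬ ConvexOn ℝ Set.univ
      (fun v : Fin L → ℝ =>
        (1/2 : ℝ) * ∑ t, ‖Matrix.vecMulVec (x t) (x t)
            - a n t • Matrix.vecMulVec v v
            - ∑ j ∈ univ.erase n, a j t • Matrix.vecMulVec (e j) (e j)‖^2) :=
  kernelNMF_quadratic_endmember_subproblem_nonconvex_general n x a e k hneg
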